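/- Let (A, A*) be a tridiagonal pair on V with eigenspace orderings V_0, ..., V_d of A and V*_0, ..., V*_d of A*, and let D denote the subalgebra of End(V) generated by A. Then the following are equivalent: (i) there exists a nonzero X ∈ D such that X V*_0 ⊆ V*_d; (ii) every eigenspace V_i of A and every eigenspace V*_i of A* has dimension 1 over K (that is, (A, A*) is a Leonard pair). -/

import Mathlib

open Polynomial

/-- A tridiagonal pair on `V`, with eigenspace orderings `Ev 0, ..., Ev d` of `A`
(with eigenvalues `θ 0, ..., θ d`) and `Ew 0, ..., Ew d` of `B = A*`
(with eigenvalues `θ' 0, ..., θ' d`).  For indices `i > d` we set `Ev i = ⊥`,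
`Ew i = ⊥`, encoding the conventions `V_{-1} = 0`, `V_{d+1} = 0`
(note `Ev (0 - 1) = Ev 0` by truncated subtraction, which is harmless in the
tridiagonal conditions below since `Ev i` appears in the sum anyway). -/
structure TridiagonalPair (K V : Type*) [Field K] [AddCommGroup V] [Module K V]
    [FiniteDimensional K V] where
  A : Module.End K V
  B : Module.End K V
  d : ℕ
  Ev : ℕ → Submodule K V
  Ew : ℕ → Submodule K V
  θ : ℕ → K
  θ' : ℕ → K
  hEv_eig : ∀ i ≤ d, Ev i = Module.End.eigenspace A (θ i)
  hEv_ne : ∀ i ≤ d, Ev i ≠ ⊥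
  hEv_all : ∀ μ : K, Module.End.eigenspace A μ ≠ ⊥ → ∃ i ≤ d, θ i = μ
  hθ_inj : ∀ i ≤ d, ∀ j ≤ d, θ i = θ j → i = j
  hEv_top : (⨆ i ∈ Finset.range (d + 1), Ev i) = ⊤
  hEv_bot : ∀ i, d < i → Ev i = ⊥
  hEw_eig : ∀ i ≤ d, Ew i = Module.End.eigenspace B (θ' i)
  hEw_ne : ∀ i ≤ d, Ew i ≠ ⊥
  hEw_all : ∀ μ : K, Module.End.eigenspace B μ ≠ ⊥ → ∃ i ≤ d, θ' i = μ
  hθ'_inj : ∀ i ≤ d, ∀ j ≤ d, θ' i = θ' j → i = j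
  hEw_top : (⨆ i ∈ Finset.range (d + 1), Ew i) = ⊤
  hEw_bot : ∀ i, d < i → Ew i = ⊥
  hTriB : ∀ i ≤ d, ∀ v ∈ Ev i, B v ∈ Ev (i - 1) ⊔ Ev i ⊔ Ev (i + 1)
  hTriA : ∀ i ≤ d, ∀ v ∈ Ew i, A v ∈ Ew (i - 1) ⊔ Ew i ⊔ Ew (i + 1)
  hIrr : ∀ W : Submodule K V, (∀ v ∈ W, A v ∈ W) → (∀ v ∈ W, B v ∈ W) →
    W = ⊥ ∨ W = ⊤

/-- The polynomial `τ_i = (λ - θ_0)(λ - θ_1) ⋯ (λ - θ_{i-1})`. -/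
noncomputable def tau {K : Type*} [Field K] (θ : ℕ → K) (i : ℕ) : Polynomial K :=
  ∏ k ∈ Finset.range i, (X - C (θ k))

/-!
Write `F_k = V*_0 + ⋯ + V*_k` and `G_k = V_k + ⋯ + V_d`. The sum of the spaces `F_k ∩ G_{k+1}` is
invariant under `A` and `A*` and misses `V_0`, so by irreducibility `F_k ∩ G_{k+1} = 0`; hence the
spaces `U_i = F_i ∩ G_i` are independent. Running the same argument with `V_0 + ⋯ + V_{d-k}` in
place of `G_k` gives `V*_0 ∩ (V_0 + ⋯ + V_{d-1}) = 0`. For `0 ≠ v ∈ V*_0` the vectors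
`u_i = τ_i(A) v` therefore satisfy `0 ≠ u_i ∈ U_i` for `i ≤ d`, and `A u_i = u_{i+1} + θ_i u_i`.

Every `X ∈ D` is `∑_{i ≤ d} c_i τ_i(A)`. If `X V*_0 ⊆ V*_d`, comparing `U_i`-components in
`(A* - θ*_d) X v = 0` gives `c_{i+1} (A* - θ*_{i+1}) u_{i+1} = (θ*_d - θ*_i) c_i u_i`. If `a` is
the first index with `c_a ≠ 0`, this makes `span {u_a, …, u_d}` invariant under `A` and `A*`, so it
is `V`; then `dim V ≤ d + 1`, which forces every eigenspace to be a line. Conversely, for a Leonard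
pair the `u_i` form a basis of `V`, so some `g(A)` sends `v` to a nonzero vector of `V*_d`, and
`V*_0 = K v`.
-/

open Set

theorem eval_tau_eq_zero {K : Type*} [Field K] (θ : ℕ → K) {n h : ℕ} (hh : h < n) :
    (tau θ n).eval (θ h) = 0 := by
  rw [tau, eval_prod]
  exact Finset.prod_eq_zero (Finset.mem_range.2 hh) (by simp)

theorem exists_eq_tau_mul_add_sum {K : Type*} [Field K] (θ : ℕ → K) (f : K[X]) (n : ℕ) :
    ∃ (q : K[X]) (c : ℕ → K), f = tau θ n * q + ∑ i ∈ Finset.range n, c i • tau θ i := by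
  induction n with
  | zero => exact ⟨f, 0, by simp [tau]⟩
  | succ n ih =>
    obtain ⟨q, c, hf⟩ := ih
    refine ⟨q /ₘ (X - C (θ n)), Function.update c n (q.eval (θ n)), ?_⟩
    rw [Finset.sum_range_succ, Function.update_self, Finset.sum_congr rfl fun i hi =>
      by rw [Function.update_of_ne (Finset.mem_range.1 hi).ne], hf]
    conv_lhs => rw [← modByMonic_add_div q (X - C (θ n)), modByMonic_X_sub_C_eq_C_eval]
    simp only [tau, Finset.prod_range_succ, smul_eq_C_mul]
    ring

namespace TridiagonalPair

variable {K V : Type*} [Field K] [AddCommGroup V] [Module K V] [FiniteDimensional K V]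
  (p : TridiagonalPair K V)

def swap : TridiagonalPair K V where
  A := p.B
  B := p.A
  d := p.d
  Ev := p.Ew
  Ew := p.Ev
  θ := p.θ'
  θ' := p.θ
  hEv_eig := p.hEw_eig
  hEv_ne := p.hEw_ne
  hEv_all := p.hEw_all
  hθ_inj := p.hθ'_inj
  hEv_top := p.hEw_top
  hEv_bot := p.hEw_bot
  hEw_eig := p.hEv_eig
  hEw_ne := p.hEv_ne
  hEw_all := p.hEv_all
  hθ'_inj := p.hθ_inj
  hEw_top := p.hEv_top
  hEw_bot := p.hEv_bot
  hTriB := p.hTriA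
  hTriA := p.hTriB
  hIrr W hA hB := p.hIrr W hB hA

def evSum (S : Set ℕ) : Submodule K V := ⨆ h ∈ S, p.Ev h

variable {p}

theorem apply_eq_smul_of_mem_Ev {i : ℕ} (hi : i ≤ p.d) {v : V} (hv : v ∈ p.Ev i) :
    p.A v = p.θ i • v := by
  rw [p.hEv_eig i hi] at hv
  exact Module.End.mem_eigenspace_iff.1 hv

theorem B_apply_eq_smul_of_mem_Ew {i : ℕ} (hi : i ≤ p.d) {v : V} (hv : v ∈ p.Ew i) :
    p.B v = p.θ' i • v :=
  apply_eq_smul_of_mem_Ev (p := p.swap) hi hv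

theorem Ev_le_evSum {S : Set ℕ} {h : ℕ} (hh : h ∈ S) : p.Ev h ≤ p.evSum S :=
  le_biSup p.Ev hh

theorem evSum_mono {S T : Set ℕ} (hST : S ⊆ T) : p.evSum S ≤ p.evSum T :=
  biSup_mono hST

variable (p) in
theorem evSum_Iic : p.evSum (Iic p.d) = ⊤ := by
  simpa [evSum, Nat.lt_succ_iff] using p.hEv_top

theorem evSum_insert (j : ℕ) (S : Set ℕ) : p.evSum (insert j S) = p.Ev j ⊔ p.evSum S :=
  iSup_insert

theorem evSum_singleton (j : ℕ) : p.evSum {j} = p.Ev j :=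
  iSup_singleton

theorem disjoint_Ev_evSum {j : ℕ} {S : Set ℕ} (hj : j ∉ S) : Disjoint (p.Ev j) (p.evSum S) := by
  rcases le_or_gt j p.d with hjd | hjd
  · rw [p.hEv_eig j hjd]
    refine (Module.End.eigenspaces_iSupIndep p.A (p.θ j)).mono_right (iSup₂_le fun h hh => ?_)
    rcases le_or_gt h p.d with hhd | hhd
    · rw [p.hEv_eig h hhd]
      exact le_iSup₂_of_le (p.θ h) (fun he => hj (p.hθ_inj h hhd j hjd he ▸ hh)) le_rfl
    · simp [p.hEv_bot h hhd]
  · simp [p.hEv_bot j hjd]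

theorem evSum_ne_top {j : ℕ} (hj : j ≤ p.d) {S : Set ℕ} (hS : j ∉ S) : p.evSum S ≠ ⊤ := fun h =>
  p.hEv_ne j hj ((disjoint_Ev_evSum hS).eq_bot_of_le (h ▸ le_top))

variable (p) in
theorem finrank_eq_sum_finrank_Ev :
    Module.finrank K V = ∑ i ∈ Finset.range (p.d + 1), Module.finrank K (p.Ev i) := by
  have h (n : ℕ) :
      Module.finrank K (p.evSum (Iio n)) = ∑ i ∈ Finset.range n, Module.finrank K (p.Ev i) := by
    induction n with
    | zero =>
      rw [show p.evSum (Iio 0) = ⊥ by simp [evSum], finrank_bot, Finset.sum_range_zero]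
    | succ n ih =>
      have := Submodule.finrank_sup_add_finrank_inf_eq (p.Ev n) (p.evSum (Iio n))
      rw [(disjoint_Ev_evSum (S := Iio n) (lt_irrefl n)).eq_bot, finrank_bot, add_zero] at this
      rw [Iio_add_one_eq_Iic, ← Iio_insert, evSum_insert, Finset.sum_range_succ, ← ih, this,
        add_comm]
  rw [← h, Iio_add_one_eq_Iic, p.evSum_Iic, finrank_top]

theorem finrank_Ev_eq_one_of_finrank_le (hV : Module.finrank K V ≤ p.d + 1) {i : ℕ}
    (hi : i ≤ p.d) : Module.finrank K (p.Ev i) = 1 := by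
  have hpos : ∀ j ∈ Finset.range (p.d + 1), 1 ≤ Module.finrank K (p.Ev j) := fun j hj =>
    Submodule.one_le_finrank_iff.2 (p.hEv_ne j (Nat.le_of_lt_succ (Finset.mem_range.1 hj)))
  have hsum : ∑ _j ∈ Finset.range (p.d + 1), 1 =
      ∑ j ∈ Finset.range (p.d + 1), Module.finrank K (p.Ev j) :=
    le_antisymm (Finset.sum_le_sum hpos) (by simpa [← p.finrank_eq_sum_finrank_Ev] using hV)
  exact ((Finset.sum_eq_sum_iff_of_le hpos).1 hsum i
    (Finset.mem_range.2 (Nat.lt_succ_of_le hi))).symm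

theorem finrank_eq_of_finrank_Ev_eq_one (h : ∀ i ≤ p.d, Module.finrank K (p.Ev i) = 1) :
    Module.finrank K V = p.d + 1 := by
  rw [p.finrank_eq_sum_finrank_Ev,
    Finset.sum_congr rfl fun i hi => h i (Nat.le_of_lt_succ (Finset.mem_range.1 hi))]
  simp

theorem aeval_mem_evSum (f : K[X]) {S T : Set ℕ}
    (hST : ∀ h ∈ S, h ≤ p.d → f.eval (p.θ h) ≠ 0 → h ∈ T) {v : V} (hv : v ∈ p.evSum S) :
    aeval p.A f v ∈ p.evSum T := by
  suffices p.evSum S ≤ (p.evSum T).comap (aeval p.A f) from this hv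
  refine iSup₂_le fun h hh w hw => ?_
  rcases le_or_gt h p.d with hd | hd
  · rw [Submodule.mem_comap,
      Module.End.aeval_apply_of_mem_apply_eq_smul (apply_eq_smul_of_mem_Ev hd hw)]
    by_cases hf : f.eval (p.θ h) = 0
    · simp [hf]
    · exact Submodule.smul_mem _ _ (Ev_le_evSum (hST h hh hd hf) hw)
  · simp [(Submodule.mem_bot K).1 (p.hEv_bot h hd ▸ hw)]

theorem aeval_apply_eq_zero {f : K[X]} {S : Set ℕ} (hf : ∀ h ∈ S, h ≤ p.d → f.eval (p.θ h) = 0)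
    {v : V} (hv : v ∈ p.evSum S) : aeval p.A f v = 0 := by
  simpa [evSum] using aeval_mem_evSum f (T := ∅) (fun h hh hd hne => (hne (hf h hh hd)).elim) hv

theorem sub_smul_mem_evSum (j : ℕ) {S T : Set ℕ} (hST : ∀ h ∈ S, h ≠ j → h ∈ T) {v : V}
    (hv : v ∈ p.evSum S) : p.A v - p.θ j • v ∈ p.evSum T := by
  have := aeval_mem_evSum (X - C (p.θ j)) (T := T)
    (fun h hh _ hne => hST h hh fun e => by simp [e] at hne) hv
  simpa [Module.algebraMap_end_apply] using this

theorem B_mem_evSum {S T : Set ℕ} (hST : ∀ h ∈ S, h - 1 ∈ T ∧ h ∈ T ∧ h + 1 ∈ T) {v : V}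
    (hv : v ∈ p.evSum S) : p.B v ∈ p.evSum T := by
  suffices p.evSum S ≤ (p.evSum T).comap p.B from this hv
  refine iSup₂_le fun h hh w hw => ?_
  rcases le_or_gt h p.d with hd | hd
  · obtain ⟨h₁, h₂, h₃⟩ := hST h hh
    have : p.Ev (h - 1) ⊔ p.Ev h ⊔ p.Ev (h + 1) ≤ p.evSum T :=
      sup_le (sup_le (Ev_le_evSum h₁) (Ev_le_evSum h₂)) (Ev_le_evSum h₃)
    exact this (p.hTriB h hd w hw)
  · simp [(Submodule.mem_bot K).1 (p.hEv_bot h hd ▸ hw)]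

theorem swap_evSum_Iic_zero : p.swap.evSum (Iic 0) = p.Ew 0 := by
  rw [show Iic 0 = ({0} : Set ℕ) by ext; simp]
  exact p.swap.evSum_singleton 0

/-- `G` plays the role of the flag `G_k = V_k + ⋯ + V_d`: the sum over `k` of
`(V*_0 + ⋯ + V*_k) ∩ G (k + 1)` is invariant under `A` and `A*`, and lies in `G 1 ≠ V`. -/
theorem swap_evSum_Iic_inf_eq_bot {G : ℕ → Submodule K V} {α : ℕ → K} (hG : Antitone G)
    (hAG : ∀ k, ∀ v ∈ G k, p.A v - α k • v ∈ G (k + 1))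
    (hBG : ∀ k, ∀ v ∈ G (k + 1), p.B v ∈ G k) (hG1 : G 1 ≠ ⊤) (k : ℕ) :
    p.swap.evSum (Iic k) ⊓ G (k + 1) = ⊥ := by
  set F : ℕ → Submodule K V := fun k => p.swap.evSum (Iic k)
  set T := ⨆ k, F k ⊓ G (k + 1)
  have hT : ∀ k, F k ⊓ G (k + 1) ≤ T := le_iSup (fun k => F k ⊓ G (k + 1))
  have hF : ∀ k, F k ≤ F (k + 1) := fun k => p.swap.evSum_mono (Iic_subset_Iic.2 k.le_succ)
  have hA : T ≤ T.comap p.A := iSup_le fun k w hw => by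
    have h₁ : p.A w - α (k + 1) • w ∈ F (k + 1) ⊓ G (k + 1 + 1) :=
      ⟨sub_mem (p.swap.B_mem_evSum (fun h hh => by simp at hh ⊢; omega) hw.1)
        (Submodule.smul_mem _ _ (hF k hw.1)), hAG _ _ hw.2⟩
    rw [Submodule.mem_comap, ← sub_add_cancel (p.A w) (α (k + 1) • w)]
    exact add_mem (hT _ h₁) (hT k (Submodule.smul_mem _ _ hw))
  have hB : T ≤ T.comap p.B := iSup_le fun k w hw => by
    rw [Submodule.mem_comap]
    cases k with
    | zero =>
      rw [B_apply_eq_smul_of_mem_Ew (Nat.zero_le _)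
        (show w ∈ p.Ew 0 from p.swap_evSum_Iic_zero ▸ hw.1)]
      exact Submodule.smul_mem _ _ (hT 0 hw)
    | succ k =>
      have h₁ : p.B w - p.θ' (k + 1) • w ∈ F k ⊓ G (k + 1) :=
        ⟨p.swap.sub_smul_mem_evSum _ (fun h hh hne => by simp at hh ⊢; omega) hw.1,
          sub_mem (hBG _ _ hw.2) (Submodule.smul_mem _ _ (hG (k + 1).le_succ hw.2))⟩
      rw [← sub_add_cancel (p.B w) (p.θ' (k + 1) • w)]
      exact add_mem (hT k h₁) (hT _ (Submodule.smul_mem _ _ hw))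
  rcases p.hIrr T (fun w hw => hA hw) (fun w hw => hB hw) with hT₀ | hT₀
  · exact le_bot_iff.1 (hT₀ ▸ hT k)
  · exact absurd (top_le_iff.1 (hT₀ ▸ iSup_le fun k => inf_le_right.trans (hG (by omega)))) hG1

theorem swap_evSum_Iic_inf_evSum_Ici (k : ℕ) :
    p.swap.evSum (Iic k) ⊓ p.evSum (Ici (k + 1)) = ⊥ :=
  p.swap_evSum_Iic_inf_eq_bot (α := p.θ) (fun _ _ h => evSum_mono (Ici_subset_Ici.2 h))
    (fun k _ hv => sub_smul_mem_evSum k (fun h hh hne => by simp at hh ⊢; omega) hv)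
    (fun k _ hv => B_mem_evSum (fun h hh => by simp at hh ⊢; omega) hv)
    (evSum_ne_top (Nat.zero_le _) (by simp)) k

theorem Ew_zero_inf_evSum_Iio : p.Ew 0 ⊓ p.evSum (Iio p.d) = ⊥ := by
  have := p.swap_evSum_Iic_inf_eq_bot (G := fun k => p.evSum {h | h + k ≤ p.d})
    (α := fun k => p.θ (p.d - k)) (fun _ _ h => evSum_mono fun x hx => by simp at hx ⊢; omega)
    (fun k _ hv => sub_smul_mem_evSum _ (fun h hh hne => by simp at hh hne ⊢; omega) hv)
    (fun k _ hv => B_mem_evSum (fun h hh => by simp at hh ⊢; omega) hv)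
    (evSum_ne_top le_rfl (by simp)) 0
  rwa [swap_evSum_Iic_zero, show {h | h + (0 + 1) ≤ p.d} = Iio p.d by ext; simp] at this

variable (p) in
/-- The split decomposition `U_i = (V*_0 + ⋯ + V*_i) ∩ (V_i + ⋯ + V_d)`. -/
def split (i : ℕ) : Submodule K V := p.swap.evSum (Iic i) ⊓ p.evSum (Ici i)

theorem B_sub_smul_mem_split {i : ℕ} {w : V} (hw : w ∈ p.split (i + 1)) :
    p.B w - p.θ' (i + 1) • w ∈ p.split i :=
  ⟨p.swap.sub_smul_mem_evSum _ (fun h hh hne => by simp at hh ⊢; omega) hw.1,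
    sub_mem (B_mem_evSum (fun h hh => by simp at hh ⊢; omega) hw.2)
      (Submodule.smul_mem _ _ (evSum_mono (Ici_subset_Ici.2 i.le_succ) hw.2))⟩

variable (p) in
theorem iSupIndep_split : iSupIndep p.split := by
  classical
  rw [iSupIndep_iff_finsetSum_eq_zero_imp_eq_zero]
  intro s
  induction s using Finset.induction_on_max with
  | empty => simp
  | insert m s hlt ih =>
    intro z hz hsum
    rw [Finset.sum_insert fun hm => lt_irrefl m (hlt m hm)] at hsum
    have hzm : z m = 0 := by
      cases m with
      | zero => simpa [Finset.sum_eq_zero fun i hi => absurd (hlt i hi) (Nat.not_lt_zero i)]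
          using hsum
      | succ k =>
        have hF : z (k + 1) ∈ p.swap.evSum (Iic k) := by
          rw [eq_neg_of_add_eq_zero_left hsum]
          refine neg_mem (Submodule.sum_mem _ fun i hi => ?_)
          exact p.swap.evSum_mono (Iic_subset_Iic.2 (Nat.le_of_lt_succ (hlt i hi)))
            (hz i (Finset.mem_insert_of_mem hi)).1
        have := p.swap_evSum_Iic_inf_evSum_Ici k ▸
          Submodule.mem_inf.2 ⟨hF, (hz _ (Finset.mem_insert_self _ _)).2⟩
        exact (Submodule.mem_bot K).1 this
    rw [hzm, zero_add] at hsum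
    intro i hi
    rcases Finset.mem_insert.1 hi with rfl | hi
    · exact hzm
    · exact ih z (fun i hi => hz i (Finset.mem_insert_of_mem hi)) hsum i hi

theorem aeval_tau_succ (i : ℕ) :
    aeval p.A (tau p.θ (i + 1)) = (p.A - p.θ i • 1) * aeval p.A (tau p.θ i) := by
  rw [tau, Finset.prod_range_succ, mul_comm, ← tau, map_mul, map_sub, aeval_X, aeval_C,
    Algebra.algebraMap_eq_smul_one]

theorem aeval_tau_eq_zero : aeval p.A (tau p.θ (p.d + 1)) = 0 :=
  LinearMap.ext fun _ => aeval_apply_eq_zero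
    (fun _ _ hd => eval_tau_eq_zero _ (Nat.lt_succ_of_le hd)) (p.evSum_Iic ▸ Submodule.mem_top)

theorem exists_eq_sum_of_mem_adjoin {X : Module.End K V} (hX : X ∈ Algebra.adjoin K {p.A}) :
    ∃ c : ℕ → K, X = ∑ i ∈ Finset.range (p.d + 1), c i • aeval p.A (tau p.θ i) := by
  rw [Algebra.adjoin_singleton_eq_range_aeval] at hX
  obtain ⟨f, rfl⟩ := hX
  obtain ⟨q, c, rfl⟩ := exists_eq_tau_mul_add_sum p.θ f (p.d + 1)
  exact ⟨c, by simp [aeval_tau_eq_zero]⟩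

variable (p) in
noncomputable def tauVec (v : V) (i : ℕ) : V := aeval p.A (tau p.θ i) v

theorem tauVec_zero (v : V) : p.tauVec v 0 = v := by
  simp [tauVec, tau]

theorem tauVec_succ (v : V) (i : ℕ) :
    p.tauVec v (i + 1) = p.A (p.tauVec v i) - p.θ i • p.tauVec v i := by
  simp [tauVec, aeval_tau_succ]

theorem tauVec_d_succ (v : V) : p.tauVec v (p.d + 1) = 0 := by
  simp [tauVec, aeval_tau_eq_zero]

theorem tauVec_mem_split {v : V} (hv : v ∈ p.Ew 0) (i : ℕ) : p.tauVec v i ∈ p.split i := by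
  induction i with
  | zero =>
    rw [tauVec_zero]
    exact ⟨p.swap_evSum_Iic_zero ▸ hv,
      evSum_mono (fun h _ => Nat.zero_le h) (p.evSum_Iic ▸ Submodule.mem_top)⟩
  | succ i ih =>
    rw [tauVec_succ]
    exact ⟨sub_mem (p.swap.B_mem_evSum (fun h hh => by simp at hh ⊢; omega) ih.1)
        (Submodule.smul_mem _ _ (p.swap.evSum_mono (Iic_subset_Iic.2 i.le_succ) ih.1)),
      sub_smul_mem_evSum i (fun h hh hne => by simp at hh ⊢; omega) ih.2⟩

/-- `τ_d(A)` kills `V_0 + ⋯ + V_{d-1}` and is invertible on `V_d`, while `V*_0` meets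
`V_0 + ⋯ + V_{d-1}` trivially. -/
theorem tauVec_d_ne_zero {v : V} (hv : v ∈ p.Ew 0) (hv0 : v ≠ 0) : p.tauVec v p.d ≠ 0 := by
  intro hd
  have hv' : v ∈ p.Ev p.d ⊔ p.evSum (Iio p.d) := by
    rw [← evSum_insert, Iio_insert, p.evSum_Iic]
    trivial
  obtain ⟨x, hx, y, hy, rfl⟩ := Submodule.mem_sup.1 hv'
  have hy0 : aeval p.A (tau p.θ p.d) y = 0 :=
    aeval_apply_eq_zero (fun _ hh _ => eval_tau_eq_zero _ hh) hy
  have hτ : (tau p.θ p.d).eval (p.θ p.d) ≠ 0 := by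
    rw [tau, eval_prod, Finset.prod_ne_zero_iff]
    intro k hk he
    rw [eval_sub, eval_X, eval_C, sub_eq_zero] at he
    exact (Finset.mem_range.1 hk).ne (p.hθ_inj k (Finset.mem_range.1 hk).le p.d le_rfl he.symm)
  have hx0 : x = 0 := by
    rw [tauVec, map_add, hy0, add_zero,
      Module.End.aeval_apply_of_mem_apply_eq_smul (apply_eq_smul_of_mem_Ev le_rfl hx)] at hd
    exact (smul_eq_zero.1 hd).resolve_left hτ
  subst hx0
  rw [zero_add] at hv hv0
  exact hv0 ((Submodule.mem_bot K).1 (p.Ew_zero_inf_evSum_Iio ▸ Submodule.mem_inf.2 ⟨hv, hy⟩))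

theorem tauVec_ne_zero {v : V} (hv : v ∈ p.Ew 0) (hv0 : v ≠ 0) {i : ℕ} (hi : i ≤ p.d) :
    p.tauVec v i ≠ 0 := by
  intro h
  refine tauVec_d_ne_zero hv hv0 (Nat.le_induction h (fun j _ hj => ?_) p.d hi)
  rw [tauVec_succ, hj, map_zero, smul_zero, sub_zero]

theorem smul_B_sub_smul_tauVec_eq {v : V} (hv : v ∈ p.Ew 0) {c : ℕ → K}
    (hw : ∑ i ∈ Finset.range (p.d + 1), c i • p.tauVec v i ∈ p.Ew p.d) {i : ℕ} (hi : i < p.d) :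
    c (i + 1) • (p.B (p.tauVec v (i + 1)) - p.θ' (i + 1) • p.tauVec v (i + 1)) =
      (p.θ' p.d - p.θ' i) • c i • p.tauVec v i := by
  set u := p.tauVec v
  set y : ℕ → V := fun i => p.B (u i) - p.θ' i • u i
  set z : ℕ → V := fun i => c (i + 1) • y (i + 1) - (p.θ' p.d - p.θ' i) • c i • u i
  have hz : ∀ i, z i ∈ p.split i := fun i =>
    sub_mem (Submodule.smul_mem _ _ (B_sub_smul_mem_split (tauVec_mem_split hv _)))
      (Submodule.smul_mem _ _ (Submodule.smul_mem _ _ (tauVec_mem_split hv _)))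
  have hy0 : y 0 = 0 := by
    simp only [y, u, tauVec_zero, B_apply_eq_smul_of_mem_Ew (Nat.zero_le _) hv, sub_self]
  have hsum : ∑ i ∈ Finset.range p.d, z i = 0 := calc
    _ = ∑ i ∈ Finset.range (p.d + 1), c i • y i -
          ∑ i ∈ Finset.range (p.d + 1), (p.θ' p.d - p.θ' i) • c i • u i := by
      rw [Finset.sum_sub_distrib, Finset.sum_range_succ' (fun i => c i • y i),
        Finset.sum_range_succ (fun i => (p.θ' p.d - p.θ' i) • c i • u i), hy0]
      simp
    _ = p.B (∑ i ∈ Finset.range (p.d + 1), c i • u i) -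
          p.θ' p.d • ∑ i ∈ Finset.range (p.d + 1), c i • u i := by
      rw [map_sum, Finset.smul_sum, ← Finset.sum_sub_distrib, ← Finset.sum_sub_distrib]
      refine Finset.sum_congr rfl fun i _ => ?_
      simp only [y, map_smul]
      module
    _ = 0 := sub_eq_zero.2 (B_apply_eq_smul_of_mem_Ew le_rfl hw)
  have := (iSupIndep_iff_finsetSum_eq_zero_imp_eq_zero _).1 p.iSupIndep_split _ z
    (fun i _ => hz i) hsum i (Finset.mem_range.2 hi)
  exact sub_eq_zero.1 this
theorem finrank_le_of_B_mem_span {v : V} (hv : v ∈ p.Ew 0) (hv0 : v ≠ 0) {a : ℕ}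
    (ha : a ≤ p.d)
    (hB : ∀ i ∈ Icc a p.d, p.B (p.tauVec v i) ∈ Submodule.span K (p.tauVec v '' Icc a p.d)) :
    Module.finrank K V ≤ p.d + 1 - a := by
  set W := Submodule.span K (p.tauVec v '' Icc a p.d)
  have hmem : ∀ i ∈ Icc a p.d, p.tauVec v i ∈ W := fun i hi =>
    Submodule.subset_span (mem_image_of_mem _ hi)
  have hinv (T : Module.End K V) (hT : ∀ i ∈ Icc a p.d, T (p.tauVec v i) ∈ W) :
      ∀ w ∈ W, T w ∈ W := fun w hw =>
    (Submodule.span_le.2 (image_subset_iff.2 hT) : W ≤ W.comap T) hw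
  have hA : ∀ i ∈ Icc a p.d, p.A (p.tauVec v i) ∈ W := by
    intro i hi
    rw [← sub_add_cancel (p.A _) (p.θ i • _), ← tauVec_succ]
    refine add_mem ?_ (Submodule.smul_mem _ _ (hmem i hi))
    rcases hi.2.eq_or_lt with rfl | hlt
    · rw [tauVec_d_succ]
      exact zero_mem _
    · exact hmem _ ⟨by have := hi.1; omega, hlt⟩
  have hW : W = ⊤ := (p.hIrr W (hinv _ hA) (hinv _ hB)).resolve_left fun h =>
    tauVec_ne_zero hv hv0 le_rfl ((Submodule.mem_bot K).1 (h ▸ hmem p.d ⟨ha, le_rfl⟩))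
  calc Module.finrank K V = Module.finrank K W := by rw [hW, finrank_top]
    _ ≤ Fintype.card (Icc a p.d) := by
      have := finrank_range_le_card (R := K) fun i : Icc a p.d => p.tauVec v i
      rwa [← image_eq_range] at this
    _ = p.d + 1 - a := by simp

theorem finrank_le_of_sum_tauVec_mem_Ew {v : V} (hv : v ∈ p.Ew 0) (hv0 : v ≠ 0) {c : ℕ → K}
    (hc : ∃ i ≤ p.d, c i ≠ 0)
    (hw : ∑ i ∈ Finset.range (p.d + 1), c i • p.tauVec v i ∈ p.Ew p.d) :
    Module.finrank K V ≤ p.d + 1 := by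
  classical
  set u := p.tauVec v
  have hrec (i : ℕ) (hi : i < p.d) := smul_B_sub_smul_tauVec_eq hv hw hi
  have hup : ∀ i < p.d, c i ≠ 0 → c (i + 1) ≠ 0 := by
    intro i hi hci hci₁
    have := hrec i hi
    rw [hci₁, zero_smul, eq_comm, smul_eq_zero, smul_eq_zero, sub_eq_zero] at this
    rcases this with h | h | h
    · exact hi.ne (p.hθ'_inj _ le_rfl _ hi.le h).symm
    · exact hci h
    · exact tauVec_ne_zero hv hv0 hi.le h
  obtain ⟨ha, hca⟩ := Nat.find_spec hc
  set a := Nat.find hc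
  have hne : ∀ i, a ≤ i → i ≤ p.d → c i ≠ 0 := fun i hai =>
    Nat.le_induction (fun _ => hca) (fun j _ ih hj => hup j hj (ih (Nat.le_of_succ_le hj))) i hai
  have hBa : p.B (u a) - p.θ' a • u a = 0 := by
    rcases Nat.eq_zero_or_pos a with h0 | hpos
    · rw [h0]
      simp only [u, tauVec_zero, B_apply_eq_smul_of_mem_Ew (Nat.zero_le _) hv, sub_self]
    · have hca' : c (a - 1) = 0 := by
        by_contra h
        exact Nat.find_min hc (Nat.sub_lt hpos one_pos) ⟨by omega, h⟩
      have := hrec (a - 1) (by omega)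
      rw [Nat.sub_add_cancel hpos, hca', zero_smul, smul_zero] at this
      exact (smul_eq_zero.1 this).resolve_left hca
  refine (finrank_le_of_B_mem_span hv hv0 ha fun i hi => ?_).trans (Nat.sub_le _ _)
  have hmem : ∀ j, a ≤ j → j ≤ p.d → u j ∈ Submodule.span K (u '' Icc a p.d) := fun j h₁ h₂ =>
    Submodule.subset_span (mem_image_of_mem _ ⟨h₁, h₂⟩)
  obtain ⟨hai, hid⟩ := hi
  rw [← sub_add_cancel (p.B (u i)) (p.θ' i • u i)]
  refine add_mem ?_ (Submodule.smul_mem _ _ (hmem i hai hid))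
  rcases hai.eq_or_lt with rfl | hlt
  · rw [hBa]
    exact zero_mem _
  · obtain ⟨j, rfl⟩ : ∃ j, i = j + 1 := ⟨i - 1, by omega⟩
    rw [← inv_smul_smul₀ (hne _ hai hid) (p.B (u (j + 1)) - _), hrec j (by omega)]
    exact Submodule.smul_mem _ _ (Submodule.smul_mem _ _
      (Submodule.smul_mem _ _ (hmem j (by omega) (by omega))))

theorem finrank_le_of_mem_adjoin {X : Module.End K V} (hX : X ∈ Algebra.adjoin K {p.A})
    (hX0 : X ≠ 0) (hXW : ∀ v ∈ p.Ew 0, X v ∈ p.Ew p.d) : Module.finrank K V ≤ p.d + 1 := by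
  obtain ⟨c, rfl⟩ := exists_eq_sum_of_mem_adjoin hX
  obtain ⟨v, hv, hv0⟩ := (Submodule.ne_bot_iff _).1 (p.hEw_ne 0 (Nat.zero_le _))
  refine finrank_le_of_sum_tauVec_mem_Ew hv hv0 ?_ (by simpa [tauVec] using hXW v hv)
  by_contra! h
  exact hX0 (Finset.sum_eq_zero fun i hi => by
    rw [h i (Nat.le_of_lt_succ (Finset.mem_range.1 hi)), zero_smul])

theorem exists_mem_adjoin_of_finrank_eq (hV : Module.finrank K V = p.d + 1)
    (hW : Module.finrank K (p.Ew 0) = 1) :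
    ∃ X : Module.End K V, X ∈ Algebra.adjoin K {p.A} ∧ X ≠ 0 ∧
      ∀ v ∈ p.Ew 0, X v ∈ p.Ew p.d := by
  obtain ⟨v, hv, hv0⟩ := (Submodule.ne_bot_iff _).1 (p.hEw_ne 0 (Nat.zero_le _))
  have hli : LinearIndependent K fun i : Fin (p.d + 1) => p.tauVec v i :=
    (p.iSupIndep_split.comp Fin.val_injective).linearIndependent _
      (fun i => tauVec_mem_split hv i) (fun i => tauVec_ne_zero hv hv0 i.is_le)
  obtain ⟨w, hw, hw0⟩ := (Submodule.ne_bot_iff _).1 (p.hEw_ne p.d le_rfl)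
  obtain ⟨b, hb⟩ := (Submodule.mem_span_range_iff_exists_fun K).1
    ((hli.span_eq_top_of_card_eq_finrank' (by simp [hV])).symm ▸ Submodule.mem_top :
      w ∈ Submodule.span K (Set.range fun i : Fin (p.d + 1) => p.tauVec v i))
  set X := aeval p.A (∑ i : Fin (p.d + 1), b i • tau p.θ i)
  have hXv : X v = w := by simp [X, ← hb, tauVec]
  refine ⟨X, aeval_mem_adjoin_singleton K _, fun h => hw0 (by rw [← hXv, h]; rfl), ?_⟩
  intro y hy
  obtain ⟨k, hk⟩ := (finrank_eq_one_iff_of_nonzero' (⟨v, hv⟩ : p.Ew 0) (by simpa using hv0)).1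
    hW ⟨y, hy⟩
  rw [show y = k • v from congrArg Subtype.val hk.symm, map_smul, hXv]
  exact Submodule.smul_mem _ _ hw

end TridiagonalPair

open TridiagonalPair in
theorem stmt13_general {K V : Type*} [Field K] [AddCommGroup V] [Module K V]
    [FiniteDimensional K V]
    (p : TridiagonalPair K V) :
    (∃ X : Module.End K V, X ∈ Algebra.adjoin K {p.A} ∧ X ≠ 0 ∧
      ∀ v ∈ p.Ew 0, X v ∈ p.Ew p.d) ↔
    (∀ i ≤ p.d, Module.finrank K (p.Ev i) = 1 ∧
      Module.finrank K (p.Ew i) = 1) := by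
  constructor
  · rintro ⟨X, hX, hX0, hXW⟩
    have hV := finrank_le_of_mem_adjoin hX hX0 hXW
    exact fun i hi => ⟨finrank_Ev_eq_one_of_finrank_le hV hi,
      finrank_Ev_eq_one_of_finrank_le (p := p.swap) hV hi⟩
  · intro h
    exact exists_mem_adjoin_of_finrank_eq
      (finrank_eq_of_finrank_Ev_eq_one fun i hi => (h i hi).1) (h 0 (Nat.zero_le _)).2

/-- The following are equivalent: (i) there exists a nonzero `X ∈ D` with
`X V*_0 ⊆ V*_d`; (ii) every eigenspace of `A` and of `A*` has dimension `1`
(that is, `(A, A*)` is a Leonard pair). -/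
theorem stmt13 {K V : Type*} [Field K] [AddCommGroup V] [Module K V]
    [FiniteDimensional K V] (hpos : 0 < Module.finrank K V)
    (p : TridiagonalPair K V) :
    (∃ X : Module.End K V, X ∈ Algebra.adjoin K {p.A} ∧ X ≠ 0 ∧
      ∀ v ∈ p.Ew 0, X v ∈ p.Ew p.d) ↔
    (∀ i ≤ p.d, Module.finrank K (p.Ev i) = 1 ∧
      Module.finrank K (p.Ew i) = 1) :=
  stmt13_general p
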